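/- Let M be a matroid on a finite ground set E, and let w : E → ℝ satisfy the tropical circuit condition. If B1 and B2 are bases of M such that w lies in the apartment A_{B1} and in the apartment A_{B2}, then the multiset of values { w(b) : b ∈ B1 } equals the multiset of values { w(b) : b ∈ B2 }. -/

import Mathlib

open Set

/-- A circuit of a matroid: a minimal dependent set. -/
def MatroidCircuit {α : Type*} (M : Matroid α) (C : Set α) : Prop :=
  M.Dep C ∧ ∀ D ⊆ C, M.Dep D → D = C

/-- `w` satisfies the tropical circuit condition (i.e. lies in the support of the
Bergman fan of `M`): on every circuit the minimum of `w` is attained by at least two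
distinct elements. -/
def TropCircuitCond {α : Type*} (M : Matroid α) (w : α → ℝ) : Prop :=
  ∀ C, MatroidCircuit M C →
    ∃ x ∈ C, ∃ y ∈ C, x ≠ y ∧ w x = w y ∧ ∀ c ∈ C, w x ≤ w c

/-- The fundamental circuit of `e` with respect to a basis `B`: the unique circuit
contained in `B ∪ {e}` (expressed as an intersection, which equals that circuit by
uniqueness). -/
def fundCircuit {α : Type*} (M : Matroid α) (B : Set α) (e : α) : Set α :=
  ⋂₀ {C | MatroidCircuit M C ∧ e ∈ C ∧ C ⊆ insert e B}

/-- `w` lies in the apartment `A_B` of the basis `B`: `w` satisfies the tropical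
circuit condition and for every `e ∉ B`, `w e = min { w c : c ∈ C(e,B), c ≠ e }`. -/
def InApartment {α : Type*} (M : Matroid α) (B : Set α) (w : α → ℝ) : Prop :=
  TropCircuitCond M w ∧
    ∀ e ∈ M.E, e ∉ B → w e = sInf (w '' (fundCircuit M B e \ {e}))

section Aux

variable {α : Type*} {M : Matroid α}

/-- Every dependent set in a finite matroid contains a circuit. -/
lemma exists_circuit_subset' [Fintype α] :
    ∀ n (D : Set α), D.ncard ≤ n → M.Dep D → ∃ C ⊆ D, MatroidCircuit M C := by
  intro n
  induction n with
  | zero =>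
    intro D hcard hdep
    have hD : D = ∅ := by
      have : D.ncard = 0 := le_antisymm hcard (Nat.zero_le _)
      rwa [Set.ncard_eq_zero (D.toFinite)] at this
    exact ⟨D, subset_rfl, ⟨hdep, fun E hE hEdep => by
      subst hD
      exact subset_empty_iff.1 hE⟩⟩
  | succ n ih =>
    intro D hcard hdep
    by_cases hmin : ∀ E ⊆ D, M.Dep E → E = D
    · exact ⟨D, subset_rfl, hdep, hmin⟩
    · push_neg at hmin
      obtain ⟨E, hED, hEdep, hne⟩ := hmin
      have hss : E ⊂ D := hED.ssubset_of_ne hne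
      obtain ⟨C, hCE, hC⟩ := ih E (by
        have := Set.ncard_lt_ncard hss D.toFinite
        omega) hEdep
      exact ⟨C, hCE.trans hED, hC⟩

lemma exists_circuit_subset [Fintype α] {D : Set α} (hdep : M.Dep D) :
    ∃ C ⊆ D, MatroidCircuit M C :=
  exists_circuit_subset' D.ncard D le_rfl hdep

lemma circuit_mem_closure {C : Set α} (hC : MatroidCircuit M C) {e : α} (he : e ∈ C) :
    e ∈ M.closure (C \ {e}) := by
  have hind : M.Indep (C \ {e}) := by
    by_contra hdep
    have hd : M.Dep (C \ {e}) := ⟨hdep, diff_subset.trans hC.1.subset_ground⟩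
    have heq := hC.2 _ diff_subset hd
    rw [← heq] at he
    exact he.2 rfl
  have hd : M.Dep (insert e (C \ {e})) := by
    rw [insert_diff_singleton, insert_eq_of_mem he]
    exact hC.1
  exact (hind.insert_dep_iff.1 hd).1

/-- The set of circuits through `e` inside `insert e B` is a singleton, so `fundCircuit`
is a genuine circuit. -/
lemma fundCircuit_spec [Fintype α] (hE : M.E = Set.univ) {B : Set α} (hB : M.IsBase B)
    {e : α} (he : e ∉ B) :
    MatroidCircuit M (fundCircuit M B e) ∧ e ∈ fundCircuit M B e ∧
      fundCircuit M B e ⊆ insert e B := by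
  -- existence of a circuit
  have hdep : M.Dep (insert e B) := hB.insert_dep ⟨by rw [hE]; trivial, he⟩
  obtain ⟨C0, hC0sub, hC0⟩ := exists_circuit_subset hdep
  have heC0 : e ∈ C0 := by
    by_contra h
    have : C0 ⊆ B := fun x hx => ((hC0sub hx).resolve_left (fun hxe => h (hxe ▸ hx)))
    exact hC0.1.1 (hB.indep.subset this)
  -- uniqueness
  have huniq : ∀ C1, MatroidCircuit M C1 → e ∈ C1 → C1 ⊆ insert e B →
      ∀ C2, MatroidCircuit M C2 → e ∈ C2 → C2 ⊆ insert e B → C1 ⊆ C2 := by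
    intro C1 hC1 heC1 hC1sub C2 hC2 heC2 hC2sub
    intro f hf
    by_contra hfC2
    have hfe : f ≠ e := fun h => hfC2 (h ▸ heC2)
    have hfB : f ∈ B := (hC1sub hf).resolve_left hfe
    set I : Set α := (C1 ∪ C2) \ {e} with hI
    have hIB : I ⊆ B := by
      rintro x ⟨hx | hx, hxe⟩
      · exact (hC1sub hx).resolve_left hxe
      · exact (hC2sub hx).resolve_left hxe
    have hIind : M.Indep I := hB.indep.subset hIB
    have hfI : f ∈ I := ⟨Or.inl hf, hfe⟩
    have he_cl : e ∈ M.closure (I \ {f}) := by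
      refine M.closure_subset_closure ?_ (circuit_mem_closure hC2 heC2)
      rintro x ⟨hx, hxe⟩
      exact ⟨⟨Or.inr hx, hxe⟩, fun h => hfC2 (h ▸ hx)⟩
    have hf_cl : f ∈ M.closure (insert e (I \ {f})) := by
      refine M.closure_subset_closure ?_ (circuit_mem_closure hC1 hf)
      rintro x ⟨hx, hxf⟩
      by_cases hxe : x = e
      · exact hxe ▸ mem_insert _ _
      · exact mem_insert_of_mem _ ⟨⟨Or.inl hx, hxe⟩, hxf⟩
    rw [Matroid.closure_insert_eq_of_mem_closure he_cl] at hf_cl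
    exact hIind.notMem_closure_sdiff_of_mem hfI hf_cl
  have hset : {C | MatroidCircuit M C ∧ e ∈ C ∧ C ⊆ insert e B} = {C0} := by
    ext C
    simp only [mem_setOf_eq, mem_singleton_iff]
    constructor
    · rintro ⟨h1, h2, h3⟩
      exact subset_antisymm (huniq C h1 h2 h3 C0 hC0 heC0 hC0sub)
        (huniq C0 hC0 heC0 hC0sub C h1 h2 h3)
    · rintro rfl
      exact ⟨hC0, heC0, hC0sub⟩
  rw [fundCircuit, hset, sInter_singleton]
  exact ⟨hC0, heC0, hC0sub⟩

/-- The key structural lemma: `B ∩ {x | a ≤ w x}` is a basis of `{x | a ≤ w x}`. -/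
lemma basis_inter [Fintype α] (hE : M.E = Set.univ) {B : Set α} (hB : M.IsBase B)
    {w : α → ℝ} (hw : InApartment M B w) (a : ℝ) :
    M.IsBasis (B ∩ {x | a ≤ w x}) {x | a ≤ w x} := by
  have hground : ∀ X : Set α, X ⊆ M.E := fun X => by rw [hE]; exact subset_univ X
  refine (hB.indep.subset inter_subset_left).isBasis_of_subset_of_subset_closure
    inter_subset_right ?_
  intro x hx
  by_cases hxB : x ∈ B
  · exact M.subset_closure _ (hground _) ⟨hxB, hx⟩
  · obtain ⟨hC, hxC, hCsub⟩ := fundCircuit_spec hE hB hxB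
    set C := fundCircuit M B x with hCdef
    have hsub : C \ {x} ⊆ B ∩ {y | a ≤ w y} := by
      rintro c ⟨hc, hcx⟩
      refine ⟨(hCsub hc).resolve_left hcx, ?_⟩
      have hwx : w x = sInf (w '' (C \ {x})) := hw.2 x (by rw [hE]; trivial) hxB
      have hle : sInf (w '' (C \ {x})) ≤ w c := by
        apply csInf_le ((C \ {x}).toFinite.image w).bddBelow
        exact mem_image_of_mem w ⟨hc, hcx⟩
      exact le_trans (le_trans hx (le_of_eq hwx)) hle
    exact M.closure_subset_closure hsub (circuit_mem_closure hC hxC)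

open Multiset in
lemma countP_le_split (a : ℝ) (s : Multiset ℝ) :
    s.countP (fun x => a ≤ x) =
      s.count a + s.countP (fun x => a < x) := by
  induction s using Multiset.induction_on with
  | empty => simp
  | cons x s ih =>
    rw [countP_cons, count_cons, countP_cons, ih]
    rcases lt_trichotomy a x with h | h | h
    · simp [h.le, h, h.ne]
      omega
    · subst h
      simp [lt_irrefl]
      omega
    · simp [not_le_of_gt h, (not_lt_of_gt h : ¬ a < x), (ne_of_gt h : a ≠ x)]

open Multiset in
lemma multiset_eq_of_filter_le_card (s t : Multiset ℝ)
    (h : ∀ a : ℝ, (s.filter (fun x => a ≤ x)).card = (t.filter (fun x => a ≤ x)).card) :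
    s = t := by
  classical
  ext a
  have hcard : ∀ (u : Multiset ℝ) (b : ℝ),
      (u.filter (fun x => b ≤ x)).card = u.countP (fun x => b ≤ x) := by
    intro u b; rw [← countP_eq_card_filter]
  -- compare countP (a < ·) on s and t
  by_cases hP : ∀ x ∈ s + t, ¬ a < x
  · -- no element greater than a
    have hs0 : s.countP (fun x => a < x) = 0 := by
      rw [countP_eq_zero]
      intro x hx
      exact hP x (mem_add.2 (Or.inl hx))
    have ht0 : t.countP (fun x => a < x) = 0 := by
      rw [countP_eq_zero]
      intro x hx
      exact hP x (mem_add.2 (Or.inr hx))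
    have := h a
    rw [hcard s a, hcard t a, countP_le_split, countP_le_split, hs0, ht0] at this
    omega
  · push_neg at hP
    obtain ⟨x0, hx0mem, hx0⟩ := hP
    -- b = least element of s + t that is > a
    set P : Finset ℝ := (s + t).toFinset.filter (fun x => a < x) with hPdef
    have hPne : P.Nonempty := ⟨x0, by
      simp only [hPdef, Finset.mem_filter, Multiset.mem_toFinset]
      exact ⟨hx0mem, hx0⟩⟩
    set b := P.min' hPne with hb
    have hab : a < b := by
      have := P.min'_mem hPne
      simp only [hPdef, Finset.mem_filter] at this
      exact this.2
    have hiff : ∀ u : Multiset ℝ, u ≤ s + t →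
        u.countP (fun x => a < x) = u.countP (fun x => b ≤ x) := by
      intro u hu
      apply countP_congr rfl
      intro x hxu
      have hxmem : x ∈ s + t := mem_of_le hu hxu
      apply propext
      constructor
      · intro hax
        have hxP : x ∈ P := by
          simp only [hPdef, Finset.mem_filter, Multiset.mem_toFinset]
          exact ⟨hxmem, hax⟩
        exact P.min'_le x hxP
      · intro hbx
        exact lt_of_lt_of_le hab hbx
    have e1 := h a; rw [hcard s a, hcard t a, countP_le_split, countP_le_split] at e1
    have e2 := h b; rw [hcard s b, hcard t b] at e2
    rw [hiff s (le_add_right s t), hiff t (le_add_left t s)] at e1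
    omega

end Aux

/-- if `w` lies in the apartments of two bases `B1`, `B2`, then the
multiset of values of `w` on `B1` equals the multiset of values of `w` on `B2`. -/
theorem apartment_values_welldefined {α : Type*} [Fintype α] (M : Matroid α)
    (hE : M.E = Set.univ) (w : α → ℝ) (B1 B2 : Set α)
    (hB1 : M.IsBase B1) (hB2 : M.IsBase B2)
    (h1 : InApartment M B1 w) (h2 : InApartment M B2 w) :
    Multiset.map w (Set.toFinite B1).toFinset.val =
      Multiset.map w (Set.toFinite B2).toFinset.val := by
  classical
  apply multiset_eq_of_filter_le_card
  intro a
  -- the filtered card equals the ncard of B ∩ {x | a ≤ w x}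
  have key : ∀ (B : Set α),
      ((Multiset.map w (Set.toFinite B).toFinset.val).filter (fun x => a ≤ x)).card =
        (B ∩ {x | a ≤ w x}).ncard := by
    intro B
    rw [Multiset.filter_map, Multiset.card_map]
    have hfin : ((Set.toFinite B).toFinset.filter (fun x => a ≤ w (x))) =
        (Set.toFinite (B ∩ {x | a ≤ w x})).toFinset := by
      ext x
      simp only [Finset.mem_filter, Set.Finite.mem_toFinset, Set.mem_inter_iff,
        Set.mem_setOf_eq]
    have : (Multiset.filter ((fun x => a ≤ x) ∘ w) (Set.toFinite B).toFinset.val).card =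
        ((Set.toFinite B).toFinset.filter (fun x => a ≤ w x)).card := by
      rfl
    rw [this, hfin, Set.ncard_eq_toFinset_card _ (Set.toFinite _)]
  rw [key B1, key B2]
  have hb1 := basis_inter hE hB1 h1 a
  have hb2 := basis_inter hE hB2 h2 a
  have := hb1.encard_eq_encard hb2
  rw [Set.ncard_def, Set.ncard_def, this]
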